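/- Let 0<q<1 and k>0, and let f be a function on (0,∞) satisfying 1/f(x+1) = [x]_q^k f(x) for all x>0, f(1)=1, f(x) ≠ 0 for all x>0, and f(x+1) ≤ f(x) for all x>M for some M≥0. Then f(x) = G_q(x)^k for all x>0. -/

import Mathlib

/-!
The quotient `h = f / G_q^k` satisfies `h(x) h(x + 1) = 1`, because `f` and `G_q^k` obey the same
functional equation; so `h` equals some `c` on `x + 2ℕ` and `1 / c` on `x + 1 + 2ℕ`. As
`G_q(y) → √(1 - q) > 0` for `y → ∞`, the eventual inequalities `f(y + 2) ≤ f(y + 1) ≤ f(y)` give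
`1 / c ≤ c ≤ 1 / c` in the limit, and `G_q(y + 2) < G_q(y)` (from `[y]_q < [y + 1]_q`) excludes
`c < 0`. Hence `c = 1`.
-/

open Real Set

/-- The infinite q-Pochhammer symbol `(a;q)_∞ = ∏_{k≥0} (1 - a q^k)`. -/
noncomputable def qPochInf (a q : ℝ) : ℝ := ∏' k : ℕ, (1 - a * q ^ k)

/-- Jackson's q-gamma function for `0 < q < 1`. -/
noncomputable def qGamma (q x : ℝ) : ℝ :=
  qPochInf q q / qPochInf (q ^ x) q * (1 - q) ^ (1 - x)

/-- The q-number `[x]_q = (1 - q^x)/(1 - q)`. -/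
noncomputable def qBracket (q x : ℝ) : ℝ := (1 - q ^ x) / (1 - q)

/-- `G_q(x) = Γ_{q²}(x/2) / (√([2]_q) Γ_{q²}((x+1)/2))`, where `[2]_q = 1 + q`. -/
noncomputable def qG (q x : ℝ) : ℝ :=
  qGamma (q ^ 2) (x / 2) / (Real.sqrt (1 + q) * qGamma (q ^ 2) ((x + 1) / 2))

open Filter Topology

section QPochhammer

variable {Q : ℝ}

lemma summable_norm_mul_pow (hQ : |Q| < 1) (a : ℝ) : Summable fun k : ℕ => ‖-(a * Q ^ k)‖ := by
  simpa [norm_mul, norm_pow] using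
    (summable_geometric_of_lt_one (abs_nonneg Q) hQ).mul_left |a|

lemma multipliable_one_sub_mul_pow (hQ : |Q| < 1) (a : ℝ) :
    Multipliable fun k : ℕ => 1 - a * Q ^ k := by
  simpa [sub_eq_add_neg] using multipliable_one_add_of_summable (summable_norm_mul_pow hQ a)

lemma qPochInf_eq_one_sub_mul (hQ : |Q| < 1) (a : ℝ) :
    qPochInf a Q = (1 - a) * qPochInf (a * Q) Q := by
  have h : Multipliable fun k : ℕ => 1 - a * Q ^ (k + 1) := by
    simpa only [pow_succ', mul_assoc] using multipliable_one_sub_mul_pow hQ (a * Q)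
  rw [qPochInf, qPochInf, tprod_eq_zero_mul' (f := fun k => 1 - a * Q ^ k) h, pow_zero, mul_one]
  simp only [pow_succ', mul_assoc]

lemma qPochInf_pos {a : ℝ} (hQ0 : 0 ≤ Q) (hQ1 : Q < 1) (ha0 : 0 ≤ a) (ha1 : a < 1) :
    0 < qPochInf a Q := by
  have hfac (k : ℕ) : 0 < 1 - a * Q ^ k := by
    nlinarith [pow_le_one₀ hQ0 hQ1.le (n := k), pow_nonneg hQ0 k]
  refine (tprod_nonneg fun k => (hfac k).le).lt_of_ne' ?_
  simpa [sub_eq_add_neg] using tprod_one_add_ne_zero_of_summable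
    (fun k => by simpa [sub_eq_add_neg] using (hfac k).ne')
    (summable_norm_mul_pow (abs_lt.mpr ⟨by linarith, hQ1⟩) a)

lemma tendsto_qPochInf_nhds_zero (hQ : |Q| < 1) :
    Tendsto (fun a => qPochInf a Q) (𝓝 0) (𝓝 1) := by
  have h := tendsto_tprod_one_add_of_dominated_convergence (𝓕 := 𝓝 (0 : ℝ))
    (f := fun a k => -(a * Q ^ k)) (g := 0) (summable_geometric_of_lt_one (abs_nonneg Q) hQ)
    (fun k => (by fun_prop : Continuous fun a : ℝ => -(a * Q ^ k)).tendsto' 0 _ (by simp))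
    ?_
  · simpa [qPochInf, sub_eq_add_neg] using h
  · filter_upwards [Metric.closedBall_mem_nhds (0 : ℝ) one_pos] with a ha k
    simpa [abs_mul] using mul_le_of_le_one_left (pow_nonneg (abs_nonneg Q) k) (by simpa using ha)

end QPochhammer

section QG

variable {q : ℝ}

lemma qBracket_strictMono (hq0 : 0 < q) (hq1 : q < 1) : StrictMono (qBracket q) :=
  fun x y hxy => div_lt_div_of_pos_right
    (by linarith [Real.rpow_lt_rpow_of_exponent_gt hq0 hq1 hxy]) (by linarith)

lemma qBracket_pos (hq0 : 0 < q) (hq1 : q < 1) {x : ℝ} (hx : 0 < x) : 0 < qBracket q x := by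
  simpa [qBracket] using qBracket_strictMono hq0 hq1 hx

lemma qPochInf_rpow_sq_pos (hq0 : 0 < q) (hq1 : q < 1) {x : ℝ} (hx : 0 < x) :
    0 < qPochInf (q ^ x) (q ^ 2) :=
  qPochInf_pos (by positivity) (by nlinarith) (by positivity) (Real.rpow_lt_one hq0.le hq1 hx)

lemma qG_eq_sqrt_mul_div (hq0 : 0 < q) (hq1 : q < 1) (x : ℝ) :
    qG q x = √(1 - q) * (qPochInf (q ^ (x + 1)) (q ^ 2) / qPochInf (q ^ x) (q ^ 2)) := by
  have hsq (y : ℝ) : (q ^ 2) ^ (y / 2) = q ^ y := by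
    rw [← Real.rpow_natCast_mul hq0.le]; ring_nf
  have hhalf : (1 - q ^ 2) ^ (1 - x / 2) =
      (1 - q ^ 2) ^ (1 - (x + 1) / 2) * (√(1 - q) * √(1 + q)) := by
    rw [← Real.sqrt_mul (by linarith), show (1 - q) * (1 + q) = 1 - q ^ 2 by ring,
      Real.sqrt_eq_rpow, ← Real.rpow_add (by nlinarith)]
    ring_nf
  have hC : 0 < qPochInf (q ^ 2) (q ^ 2) :=
    qPochInf_pos (by positivity) (by nlinarith) (by positivity) (by nlinarith)
  have : 0 < √(1 + q) := Real.sqrt_pos.mpr (by linarith)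
  have : 0 < (1 - q ^ 2) ^ (1 - (x + 1) / 2) := Real.rpow_pos_of_pos (by nlinarith) _
  rw [qG, qGamma, qGamma, hsq, hsq, hhalf]
  generalize (1 - q ^ 2) ^ (1 - (x + 1) / 2) = A at *
  field_simp

lemma qG_pos (hq0 : 0 < q) (hq1 : q < 1) {x : ℝ} (hx : 0 < x) : 0 < qG q x := by
  rw [qG_eq_sqrt_mul_div hq0 hq1]
  have := qPochInf_rpow_sq_pos hq0 hq1 hx
  have := qPochInf_rpow_sq_pos hq0 hq1 (x := x + 1) (by linarith)
  have : 0 < √(1 - q) := Real.sqrt_pos.mpr (by linarith)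
  positivity

lemma qG_mul_qG_add_one (hq0 : 0 < q) (hq1 : q < 1) {x : ℝ} (hx : 0 < x) :
    qG q x * qG q (x + 1) = (qBracket q x)⁻¹ := by
  have hsplit : qPochInf (q ^ x) (q ^ 2) = (1 - q ^ x) * qPochInf (q ^ (x + 1 + 1)) (q ^ 2) := by
    rw [qPochInf_eq_one_sub_mul (by rw [abs_of_pos (by positivity)]; nlinarith), add_assoc,
      Real.rpow_add hq0, one_add_one_eq_two, Real.rpow_two]
  have := qPochInf_rpow_sq_pos hq0 hq1 (x := x + 1) (by linarith)
  have := qPochInf_rpow_sq_pos hq0 hq1 (x := x + 1 + 1) (by linarith)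
  have : 1 - q ^ x ≠ 0 := by linarith [Real.rpow_lt_one hq0.le hq1 hx]
  have : √(1 - q) ^ 2 = 1 - q := Real.sq_sqrt (by linarith)
  rw [qG_eq_sqrt_mul_div hq0 hq1, qG_eq_sqrt_mul_div hq0 hq1, hsplit, qBracket]
  field_simp
  linear_combination this

lemma qG_add_two_lt (hq0 : 0 < q) (hq1 : q < 1) {x : ℝ} (hx : 0 < x) :
    qG q (x + 2) < qG q x := by
  have h₀ := qG_mul_qG_add_one hq0 hq1 hx
  have h₁ := qG_mul_qG_add_one hq0 hq1 (x := x + 1) (by linarith)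
  rw [add_assoc, one_add_one_eq_two] at h₁
  have hlt : (qBracket q (x + 1))⁻¹ < (qBracket q x)⁻¹ :=
    inv_strictAnti₀ (qBracket_pos hq0 hq1 hx) (qBracket_strictMono hq0 hq1 (lt_add_one x))
  rw [← h₀, ← h₁, mul_comm (qG q x)] at hlt
  exact lt_of_mul_lt_mul_left hlt (qG_pos hq0 hq1 (by linarith)).le

lemma tendsto_qG_atTop (hq0 : 0 < q) (hq1 : q < 1) :
    Tendsto (qG q) atTop (𝓝 (√(1 - q))) := by
  have hpow : Tendsto (q ^ · : ℝ → ℝ) atTop (𝓝 0) :=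
    tendsto_rpow_atTop_of_base_lt_one q (by linarith) hq1
  have hpoch :=
    tendsto_qPochInf_nhds_zero (Q := q ^ 2) (by rw [abs_of_pos (by positivity)]; nlinarith)
  have hpow1 : Tendsto (fun x : ℝ => q ^ (x + 1)) atTop (𝓝 0) :=
    hpow.comp (tendsto_atTop_add_const_right _ 1 tendsto_id)
  have hden : Tendsto (fun x : ℝ => qPochInf (q ^ x) (q ^ 2)) atTop (𝓝 1) := hpoch.comp hpow
  have hnum : Tendsto (fun x : ℝ => qPochInf (q ^ (x + 1)) (q ^ 2)) atTop (𝓝 1) :=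
    hpoch.comp hpow1
  have h := (tendsto_const_nhds (x := √(1 - q))).mul (hnum.div hden one_ne_zero)
  rw [div_one, mul_one] at h
  exact h.congr fun x => (qG_eq_sqrt_mul_div hq0 hq1 x).symm

lemma qG_rpow_mul_qG_rpow_add_one (hq0 : 0 < q) (hq1 : q < 1) (k : ℝ) {x : ℝ} (hx : 0 < x) :
    qG q x ^ k * qG q (x + 1) ^ k = (qBracket q x ^ k)⁻¹ := by
  rw [← Real.mul_rpow (qG_pos hq0 hq1 hx).le (qG_pos hq0 hq1 (by linarith)).le,
    qG_mul_qG_add_one hq0 hq1 hx, Real.inv_rpow (qBracket_pos hq0 hq1 hx).le]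

end QG

section Uniqueness

variable {f g : ℝ → ℝ}

lemma ne_zero_of_mul_add_one_eq (hg : ∀ y > 0, 0 < g y)
    (hfg : ∀ y > 0, f y * f (y + 1) = g y * g (y + 1)) {y : ℝ} (hy : 0 < y) : f y ≠ 0 := by
  intro h
  have := hfg y hy
  rw [h, zero_mul] at this
  exact (mul_pos (hg y hy) (hg (y + 1) (by linarith))).ne this

lemma eq_inv_mul_add_one_of_eq_mul (hg : ∀ y > 0, 0 < g y)
    (hfg : ∀ y > 0, f y * f (y + 1) = g y * g (y + 1)) {y c : ℝ} (hy : 0 < y)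
    (h : f y = c * g y) : f (y + 1) = c⁻¹ * g (y + 1) := by
  have hc : c ≠ 0 := by
    rintro rfl
    exact ne_zero_of_mul_add_one_eq hg hfg hy (by rw [h, zero_mul])
  rw [eq_inv_mul_iff_mul_eq₀ hc]
  refine mul_left_cancel₀ (hg y hy).ne' ?_
  linear_combination hfg y hy - f (y + 1) * h

lemma eq_div_mul_add_two_mul (hg : ∀ y > 0, 0 < g y)
    (hfg : ∀ y > 0, f y * f (y + 1) = g y * g (y + 1)) {x : ℝ} (hx : 0 < x) (n : ℕ) :
    f (x + 2 * n) = f x / g x * g (x + 2 * n) := by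
  induction n with
  | zero => simp [div_mul_cancel₀ _ (hg x hx).ne']
  | succ n ih =>
    have hy : 0 < x + 2 * n := by positivity
    have h₁ := eq_inv_mul_add_one_of_eq_mul hg hfg hy ih
    have h₂ := eq_inv_mul_add_one_of_eq_mul hg hfg (by positivity) h₁
    rw [inv_inv, add_assoc, one_add_one_eq_two] at h₂
    rwa [Nat.cast_succ, mul_add_one, ← add_assoc]

theorem eq_of_mul_add_one_eq {L M : ℝ} (hg : ∀ y > 0, 0 < g y)
    (hg_two : ∀ y > 0, g (y + 2) < g y) (hg_lim : Tendsto g atTop (𝓝 L)) (hL : 0 < L)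
    (hfg : ∀ y > 0, f y * f (y + 1) = g y * g (y + 1)) (hf : ∀ y > M, f (y + 1) ≤ f y)
    {x : ℝ} (hx : 0 < x) : f x = g x := by
  set c := f x / g x
  set y : ℕ → ℝ := fun n => x + 2 * n
  have hy (n : ℕ) : 0 < y n := by positivity
  have hf₀ (n : ℕ) : f (y n) = c * g (y n) := eq_div_mul_add_two_mul hg hfg hx n
  have hf₁ (n : ℕ) : f (y n + 1) = c⁻¹ * g (y n + 1) :=
    eq_inv_mul_add_one_of_eq_mul hg hfg (hy n) (hf₀ n)
  have hf₂ (n : ℕ) : f (y n + 1 + 1) = c * g (y n + 2) := by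
    simpa [inv_inv, add_assoc, one_add_one_eq_two] using
      eq_inv_mul_add_one_of_eq_mul hg hfg (by linarith [hy n]) (hf₁ n)
  have hy_top : Tendsto y atTop atTop :=
    tendsto_atTop_add_const_left _ x (tendsto_natCast_atTop_atTop.const_mul_atTop two_pos)
  have hlarge : ∀ᶠ n in atTop, M < y n := hy_top.eventually_gt_atTop M
  have hg_lim' (t : ℝ) : Tendsto (fun n => g (y n + t)) atTop (𝓝 L) :=
    hg_lim.comp (tendsto_atTop_add_const_right _ t hy_top)
  obtain ⟨N, hN⟩ := hlarge.exists
  have hc_pos : 0 < c := by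
    have h₀₁ := hf (y N) hN
    have h₁₂ := hf (y N + 1) (by linarith)
    rw [hf₀, hf₁] at h₀₁
    rw [hf₁, hf₂] at h₁₂
    have hc0 : c ≠ 0 := div_ne_zero (ne_zero_of_mul_add_one_eq hg hfg hx) (hg x hx).ne'
    refine hc0.symm.lt_of_le ?_
    by_contra! hneg
    linarith [mul_lt_mul_of_neg_left (hg_two (y N) (hy N)) hneg]
  have hc_le : c⁻¹ * L ≤ c * L := by
    refine le_of_tendsto_of_tendsto ((hg_lim' 1).const_mul _)
      (by simpa using (hg_lim' 0).const_mul c) (hlarge.mono fun n hn => ?_)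
    simpa [hf₀, hf₁] using hf (y n) hn
  have hc_ge : c * L ≤ c⁻¹ * L := by
    refine le_of_tendsto_of_tendsto ((hg_lim' 2).const_mul _)
      ((hg_lim' 1).const_mul _) (hlarge.mono fun n hn => ?_)
    simpa [hf₁, hf₂] using hf (y n + 1) (by linarith)
  have hc : c = 1 := by
    have h : c = c⁻¹ :=
      le_antisymm ((mul_le_mul_iff_left₀ hL).mp hc_ge) ((mul_le_mul_iff_left₀ hL).mp hc_le)
    field_simp at h
    nlinarith
  exact (div_eq_one_iff_eq (hg x hx).ne').mp hc

end Uniqueness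

theorem stmt13_general (q k : ℝ) (hq0 : 0 < q) (hq1 : q < 1) (hk : 0 < k)
    (f : ℝ → ℝ)
    (hfe : ∀ x > 0, 1 / f (x + 1) = qBracket q x ^ k * f x)
    (hnz : ∀ x > 0, f x ≠ 0)
    (M : ℝ) (hdec : ∀ x > M, f (x + 1) ≤ f x) :
    ∀ x > 0, f x = qG q x ^ k := by
  intro x hx
  refine eq_of_mul_add_one_eq (g := fun y => qG q y ^ k)
    (fun y hy => Real.rpow_pos_of_pos (qG_pos hq0 hq1 hy) k)
    (fun y hy =>
      Real.rpow_lt_rpow (qG_pos hq0 hq1 (by linarith)).le (qG_add_two_lt hq0 hq1 hy) hk)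
    ((tendsto_qG_atTop hq0 hq1).rpow_const (Or.inr hk.le))
    (Real.rpow_pos_of_pos (Real.sqrt_pos.mpr (by linarith)) k) (fun y hy => ?_) hdec hx
  have h := hfe y hy
  have hf_succ := hnz (y + 1) (by linarith)
  have hBk := (Real.rpow_pos_of_pos (qBracket_pos hq0 hq1 hy) k).ne'
  rw [qG_rpow_mul_qG_rpow_add_one hq0 hq1 k hy]
  field_simp at h ⊢
  linear_combination -h

theorem stmt13 (q k : ℝ) (hq0 : 0 < q) (hq1 : q < 1) (hk : 0 < k)
    (f : ℝ → ℝ)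
    (hfe : ∀ x > 0, 1 / f (x + 1) = qBracket q x ^ k * f x)
    (hf1 : f 1 = 1)
    (hnz : ∀ x > 0, f x ≠ 0)
    (M : ℝ) (hM : 0 ≤ M) (hdec : ∀ x > M, f (x + 1) ≤ f x) :
    ∀ x > 0, f x = qG q x ^ k :=
  stmt13_general q k hq0 hq1 hk f hfe hnz M hdec
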